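/- arXiv:1610.02611 — 2 statements merged into one kernel-verified Lean document; each statement's English description precedes it below -/
import Mathlib

section
/- Let n ≥ 1 be a natural number and define F_n(w) = √(a_n(w) c_n(w) (a_n(w) c_n(w) − b_n(w)²)) / (2 w a_n(w)²). Then for every real w > 0 with w ≠ 1, F_n(w) ≤ n / (2 √w |1 − w|). -/
/-!
Multiplying the sums by `1 - w` telescopes them, and eliminating `a, b, c` gives the identity
`(1 - w)² (a c - b²) = w a² - (n + 1)² wⁿ⁺¹ ≤ w a²`. Together with `c ≤ n² a` (as `j ≤ n` in
every term) this yields `(1 - w)² a c (a c - b²) ≤ n² w a⁴`; take square roots and divide by `2 w a²`.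
-/

open Finset

/-- `aP k w = ∑_{j=0}^k w^j` -/
noncomputable def aP (k : ℕ) (w : ℝ) : ℝ := ∑ j ∈ range (k + 1), w ^ j

/-- `bP k w = ∑_{j=1}^k j w^j` -/
noncomputable def bP (k : ℕ) (w : ℝ) : ℝ := ∑ j ∈ range (k + 1), (j : ℝ) * w ^ j

/-- `cP k w = ∑_{j=1}^k j² w^j` -/
noncomputable def cP (k : ℕ) (w : ℝ) : ℝ := ∑ j ∈ range (k + 1), (j : ℝ) ^ 2 * w ^ j

/-- The first-intensity integrand for the naive model with `m = n`. -/
noncomputable def F (n : ℕ) (w : ℝ) : ℝ :=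
  Real.sqrt (aP n w * cP n w * (aP n w * cP n w - bP n w ^ 2)) / (2 * w * aP n w ^ 2)

lemma aP_succ (n : ℕ) (w : ℝ) : aP (n + 1) w = aP n w + w ^ (n + 1) :=
  sum_range_succ _ _

lemma bP_succ (n : ℕ) (w : ℝ) : bP (n + 1) w = bP n w + ((n : ℝ) + 1) * w ^ (n + 1) := by
  rw [bP, sum_range_succ, ← bP]
  push_cast
  rfl

lemma cP_succ (n : ℕ) (w : ℝ) : cP (n + 1) w = cP n w + ((n : ℝ) + 1) ^ 2 * w ^ (n + 1) := by
  rw [cP, sum_range_succ, ← cP]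
  push_cast
  rfl

lemma one_sub_mul_aP (n : ℕ) (w : ℝ) : (1 - w) * aP n w = 1 - w ^ (n + 1) := by
  induction n with
  | zero => simp [aP]
  | succ k ih => rw [aP_succ]; linear_combination ih

lemma one_sub_mul_bP (n : ℕ) (w : ℝ) :
    (1 - w) * bP n w = aP n w - 1 - n * w ^ (n + 1) := by
  induction n with
  | zero => simp [aP, bP]
  | succ k ih => rw [bP_succ, aP_succ]; push_cast; linear_combination ih

lemma one_sub_mul_cP (n : ℕ) (w : ℝ) :
    (1 - w) * cP n w = 2 * bP n w - aP n w + 1 - n ^ 2 * w ^ (n + 1) := by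
  induction n with
  | zero => simp [aP, bP, cP]
  | succ k ih => rw [cP_succ, bP_succ, aP_succ]; push_cast; linear_combination ih

lemma one_sub_sq_mul_aP_mul_cP_sub_bP_sq (n : ℕ) (w : ℝ) :
    (1 - w) ^ 2 * (aP n w * cP n w - bP n w ^ 2)
      = w * aP n w ^ 2 - ((n : ℝ) + 1) ^ 2 * w ^ (n + 1) := by
  linear_combination (1 - (n : ℝ) ^ 2 * w ^ (n + 1)) * one_sub_mul_aP n w
    + (aP n w + 1 + n * w ^ (n + 1) - (1 - w) * bP n w) * one_sub_mul_bP n w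
    + ((1 - w) * aP n w) * one_sub_mul_cP n w

section Nonneg

variable (n : ℕ) {w : ℝ} (hw : 0 ≤ w)
include hw

lemma aP_pos : 0 < aP n w :=
  sum_pos' (fun j _ => pow_nonneg hw j) ⟨0, by simp⟩

lemma bP_sq_le_aP_mul_cP : bP n w ^ 2 ≤ aP n w * cP n w :=
  sum_sq_le_sum_mul_sum_of_sq_le_mul _ (fun j _ => pow_nonneg hw j)
    (fun j _ => by positivity) (fun j _ => le_of_eq (by ring))

lemma cP_le_sq_mul_aP : cP n w ≤ n ^ 2 * aP n w := by
  rw [cP, aP, mul_sum]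
  gcongr with j hj
  exact_mod_cast Nat.lt_succ_iff.mp (mem_range.mp hj)

lemma one_sub_sq_mul_aP_mul_cP_sub_bP_sq_le :
    (1 - w) ^ 2 * (aP n w * cP n w - bP n w ^ 2) ≤ w * aP n w ^ 2 := by
  rw [one_sub_sq_mul_aP_mul_cP_sub_bP_sq]
  exact sub_le_self _ (by positivity)

lemma abs_one_sub_mul_sqrt_le :
    |1 - w| * √(aP n w * cP n w * (aP n w * cP n w - bP n w ^ 2)) ≤ n * √w * aP n w ^ 2 := by
  have ha := (aP_pos n hw).le
  rw [← Real.sqrt_sq_eq_abs, ← Real.sqrt_mul (sq_nonneg _), Real.sqrt_le_left (by positivity)]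
  calc (1 - w) ^ 2 * (aP n w * cP n w * (aP n w * cP n w - bP n w ^ 2))
      = aP n w * cP n w * ((1 - w) ^ 2 * (aP n w * cP n w - bP n w ^ 2)) := by ring
    _ ≤ (n ^ 2 * aP n w ^ 2) * (w * aP n w ^ 2) := by
      refine mul_le_mul ?_ (one_sub_sq_mul_aP_mul_cP_sub_bP_sq_le n hw) ?_ (by positivity)
      · exact (mul_le_mul_of_nonneg_left (cP_le_sq_mul_aP n hw) ha).trans_eq (by ring)
      · exact mul_nonneg (sq_nonneg _) (sub_nonneg.2 (bP_sq_le_aP_mul_cP n hw))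
    _ = (n * √w * aP n w ^ 2) ^ 2 := by rw [mul_pow, mul_pow, Real.sq_sqrt hw]; ring

end Nonneg

theorem F_upper_bound_general (n : ℕ) (w : ℝ) (hw : 0 < w) (hw1 : w ≠ 1) :
    F n w ≤ (n : ℝ) / (2 * Real.sqrt w * |1 - w|) := by
  have ha := aP_pos n hw.le
  have hd : 0 < |1 - w| := abs_pos.2 (sub_ne_zero.2 hw1.symm)
  rw [F, div_le_div_iff₀ (by positivity) (by positivity)]
  calc √(aP n w * cP n w * (aP n w * cP n w - bP n w ^ 2)) * (2 * √w * |1 - w|)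
      = 2 * √w * (|1 - w| * √(aP n w * cP n w * (aP n w * cP n w - bP n w ^ 2))) := by ring
    _ ≤ 2 * √w * (n * √w * aP n w ^ 2) := by
      gcongr 2 * √w * ?_
      exact abs_one_sub_mul_sqrt_le n hw.le
    _ = n * (2 * w * aP n w ^ 2) := by
      linear_combination (2 * (n : ℝ) * aP n w ^ 2) * Real.mul_self_sqrt hw.le

/-- For `n ≥ 1` and `w > 0`, `w ≠ 1`: `Fₙ(w) ≤ n/(2√w |1 − w|)`. -/
theorem F_upper_bound (n : ℕ) (hn : 1 ≤ n) (w : ℝ) (hw : 0 < w) (hw1 : w ≠ 1) :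
    F n w ≤ (n : ℝ) / (2 * Real.sqrt w * |1 - w|) :=
  F_upper_bound_general n w hw hw1
end

section
/- Define F_n(w) = √(a_n(w) c_n(w) (a_n(w) c_n(w) − b_n(w)²)) / (2 w a_n(w)²). For every fixed real w with 0 < w < 1, lim_{n→∞} F_n(w)/n = 0, and for every fixed real w > 1, lim_{n→∞} F_n(w)/n = 1/(2 (w − 1) √w). -/
open Finset Filter Topology

/-!
`F n w / n` is a continuous function of the rescaled sums `aP n w / s`, `cP n w / (n² s)` and
`(aP n w * cP n w - bP n w ²) / s²`, for any scale `s ≠ 0`. For `w < 1` the three series converge,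
so with `s = 1` the middle quantity tends to `0`, and so does `F n w / n`. For `w > 1` take
`s = w ^ (n + 1)`: the closed forms of the sums, obtained by multiplying with powers of `w - 1`,
give the limits `1 / (w - 1)`, `1 / (w - 1)` and `w / (w - 1) ^ 4`.
-/

theorem aP_mul_sub_one (n : ℕ) (w : ℝ) : aP n w * (w - 1) = w ^ (n + 1) - 1 :=
  geom_sum_mul w (n + 1)

theorem bP_mul_sub_one_sq (n : ℕ) (w : ℝ) :
    bP n w * (w - 1) ^ 2 = n * w ^ (n + 2) - (n + 1) * w ^ (n + 1) + w := by
  induction n with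
  | zero => simp [bP]
  | succ n ih =>
    rw [bP, sum_range_succ, ← bP]
    push_cast
    linear_combination ih

theorem cP_mul_sub_one_pow_three (n : ℕ) (w : ℝ) :
    cP n w * (w - 1) ^ 3 = w ^ (n + 1) * ((n * (w - 1) - 1) ^ 2 + w) - w * (1 + w) := by
  induction n with
  | zero => simp [cP]
  | succ n ih =>
    rw [cP, sum_range_succ, ← cP]
    push_cast
    linear_combination ih

theorem aP_mul_cP_sub_bP_sq_mul_sub_one_pow_four (n : ℕ) (w : ℝ) :
    (aP n w * cP n w - bP n w ^ 2) * (w - 1) ^ 4 =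
      w ^ (n + 1) * (w * w ^ (n + 1) - ((n + 1) ^ 2 * (w - 1) ^ 2 + 2 * w)) + w := by
  linear_combination (cP n w * (w - 1) ^ 3) * aP_mul_sub_one n w
    + (w ^ (n + 1) - 1) * cP_mul_sub_one_pow_three n w
    - (bP n w * (w - 1) ^ 2 + (n * w ^ (n + 2) - (n + 1) * w ^ (n + 1) + w)) * bP_mul_sub_one_sq n w

theorem F_div_eq (n : ℕ) (w s : ℝ) (hs : s ≠ 0) :
    F n w / n = √(aP n w / s * (cP n w / (n ^ 2 * s)) * ((aP n w * cP n w - bP n w ^ 2) / s ^ 2))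
      / (2 * w * (aP n w / s) ^ 2) := by
  have hrad : aP n w / s * (cP n w / (n ^ 2 * s)) * ((aP n w * cP n w - bP n w ^ 2) / s ^ 2)
      = aP n w * cP n w * (aP n w * cP n w - bP n w ^ 2) / (n * s ^ 2) ^ 2 := by
    field_simp
  rw [hrad, Real.sqrt_div' _ (sq_nonneg _), Real.sqrt_sq (by positivity), F]
  field_simp

theorem tendsto_F_div_of_scaled {w : ℝ} (hw : w ≠ 0) {s : ℕ → ℝ} (hs : ∀ n, s n ≠ 0)
    {α γ δ : ℝ} (hα : α ≠ 0)
    (ha : Tendsto (fun n ↦ aP n w / s n) atTop (𝓝 α))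
    (hc : Tendsto (fun n : ℕ ↦ cP n w / (n ^ 2 * s n)) atTop (𝓝 γ))
    (hd : Tendsto (fun n ↦ (aP n w * cP n w - bP n w ^ 2) / s n ^ 2) atTop (𝓝 δ)) :
    Tendsto (fun n : ℕ ↦ F n w / n) atTop (𝓝 (√(α * γ * δ) / (2 * w * α ^ 2))) := by
  simp_rw [fun n ↦ F_div_eq n w (s n) (hs n)]
  exact ((ha.mul hc).mul hd).sqrt.div (tendsto_const_nhds.mul (ha.pow 2)) (by positivity)

theorem tendsto_F_div_of_lt_one {w : ℝ} (hw₀ : 0 < w) (hw₁ : w < 1) :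
    Tendsto (fun n : ℕ ↦ F n w / n) atTop (𝓝 0) := by
  have hw : ‖w‖ < 1 := by rwa [Real.norm_of_nonneg hw₀.le]
  have partial_sums {f : ℕ → ℝ} (hf : Summable f) :
      Tendsto (fun n ↦ ∑ j ∈ range (n + 1), f j) atTop (𝓝 (∑' j, f j)) :=
    hf.hasSum.tendsto_sum_nat.comp (tendsto_add_atTop_nat 1)
  have ha : Tendsto (fun n ↦ aP n w) atTop (𝓝 (∑' j : ℕ, w ^ j)) :=
    partial_sums (summable_geometric_of_lt_one hw₀.le hw₁)
  have hb : Tendsto (fun n ↦ bP n w) atTop (𝓝 (∑' j : ℕ, (j : ℝ) * w ^ j)) :=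
    partial_sums (by simpa using summable_pow_mul_geometric_of_norm_lt_one 1 hw)
  have hc : Tendsto (fun n ↦ cP n w) atTop (𝓝 (∑' j : ℕ, (j : ℝ) ^ 2 * w ^ j)) :=
    partial_sums (summable_pow_mul_geometric_of_norm_lt_one 2 hw)
  have hA : ∑' j : ℕ, w ^ j ≠ 0 := by
    rw [tsum_geometric_of_lt_one hw₀.le hw₁]
    exact (inv_pos.2 (by linarith)).ne'
  have hcn : Tendsto (fun n : ℕ ↦ cP n w / (n ^ 2 * 1)) atTop (𝓝 0) := by
    simpa using hc.div_atTop ((tendsto_pow_atTop two_ne_zero).comp tendsto_natCast_atTop_atTop)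
  simpa using tendsto_F_div_of_scaled hw₀.ne' (s := fun _ ↦ 1) (fun _ ↦ one_ne_zero)
    hA (by simpa using ha) hcn (by simpa using (ha.mul hc).sub (hb.pow 2))

section OneLt

variable {w : ℝ}

theorem tendsto_inv_pow_succ_of_one_lt (hw : 1 < w) :
    Tendsto (fun n : ℕ ↦ (w ^ (n + 1))⁻¹) atTop (𝓝 0) :=
  tendsto_inv_atTop_zero.comp
    ((tendsto_pow_atTop_atTop_of_one_lt hw).comp (tendsto_add_atTop_nat 1))

theorem tendsto_aP_div_pow_of_one_lt (hw : 1 < w) :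
    Tendsto (fun n ↦ aP n w / w ^ (n + 1)) atTop (𝓝 (1 / (w - 1))) := by
  have h : Tendsto (fun n : ℕ ↦ (1 - (w ^ (n + 1))⁻¹) / (w - 1)) atTop
      (𝓝 ((1 - 0) / (w - 1))) :=
    (tendsto_const_nhds.sub (tendsto_inv_pow_succ_of_one_lt hw)).div_const _
  refine (sub_zero (1 : ℝ) ▸ h).congr fun n ↦ ?_
  have : w ^ (n + 1) ≠ 0 := by positivity
  rw [eq_div_of_mul_eq (by linarith) (aP_mul_sub_one n w)]
  field_simp

theorem tendsto_cP_div_of_one_lt (hw : 1 < w) :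
    Tendsto (fun n : ℕ ↦ cP n w / (n ^ 2 * w ^ (n + 1))) atTop (𝓝 (1 / (w - 1))) := by
  have hninv : Tendsto (fun n : ℕ ↦ (n : ℝ)⁻¹) atTop (𝓝 0) := tendsto_inv_atTop_nhds_zero_nat
  have h : Tendsto (fun n : ℕ ↦ (((w - 1) - (n : ℝ)⁻¹) ^ 2 + w * (n : ℝ)⁻¹ ^ 2
      - w * (1 + w) * (n : ℝ)⁻¹ ^ 2 * (w ^ (n + 1))⁻¹) / (w - 1) ^ 3) atTop
      (𝓝 ((((w - 1) - 0) ^ 2 + w * 0 ^ 2 - w * (1 + w) * 0 ^ 2 * 0) / (w - 1) ^ 3)) :=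
    ((((tendsto_const_nhds.sub hninv).pow 2).add (tendsto_const_nhds.mul (hninv.pow 2))).sub
      ((tendsto_const_nhds.mul (hninv.pow 2)).mul (tendsto_inv_pow_succ_of_one_lt hw))).div_const _
  have hw₁ : w - 1 ≠ 0 := by linarith
  convert h.congr' ?_ using 2
  · field_simp
    ring
  filter_upwards [eventually_ne_atTop 0] with n hn
  have : w ^ (n + 1) ≠ 0 := by positivity
  rw [eq_div_of_mul_eq (by positivity) (cP_mul_sub_one_pow_three n w)]
  field_simp

theorem tendsto_aP_mul_cP_sub_bP_sq_div_of_one_lt (hw : 1 < w) :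
    Tendsto (fun n ↦ (aP n w * cP n w - bP n w ^ 2) / (w ^ (n + 1)) ^ 2) atTop
      (𝓝 (w / (w - 1) ^ 4)) := by
  have hUinv := tendsto_inv_pow_succ_of_one_lt hw
  have hpoly : Tendsto (fun n : ℕ ↦ ((n : ℝ) + 1) ^ 2 / w ^ (n + 1)) atTop (𝓝 0) := by
    simpa [Function.comp_def] using
      (tendsto_pow_const_div_const_pow_of_one_lt 2 hw).comp (tendsto_add_atTop_nat 1)
  have h : Tendsto (fun n : ℕ ↦ (w - ((n : ℝ) + 1) ^ 2 / w ^ (n + 1) * (w - 1) ^ 2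
      - 2 * w * (w ^ (n + 1))⁻¹ + w * ((w ^ (n + 1))⁻¹) ^ 2) / (w - 1) ^ 4) atTop
      (𝓝 ((w - 0 * (w - 1) ^ 2 - 2 * w * 0 + w * 0 ^ 2) / (w - 1) ^ 4)) :=
    (((tendsto_const_nhds.sub (hpoly.mul_const _)).sub (tendsto_const_nhds.mul hUinv)).add
      (tendsto_const_nhds.mul (hUinv.pow 2))).div_const _
  have hw₁ : w - 1 ≠ 0 := by linarith
  convert h.congr fun n ↦ ?_ using 2
  · ring
  have : w ^ (n + 1) ≠ 0 := by positivity
  rw [eq_div_of_mul_eq (by positivity) (aP_mul_cP_sub_bP_sq_mul_sub_one_pow_four n w)]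
  field_simp
  ring

theorem tendsto_F_div_of_one_lt (hw : 1 < w) :
    Tendsto (fun n : ℕ ↦ F n w / n) atTop (𝓝 (1 / (2 * (w - 1) * √w))) := by
  have hw₀ : 0 < w := by linarith
  have hw₁ : w - 1 ≠ 0 := by linarith
  convert tendsto_F_div_of_scaled hw₀.ne' (fun n ↦ by positivity) (by simpa)
    (tendsto_aP_div_pow_of_one_lt hw) (tendsto_cP_div_of_one_lt hw)
    (tendsto_aP_mul_cP_sub_bP_sq_div_of_one_lt hw) using 2
  have hrad : 1 / (w - 1) * (1 / (w - 1)) * (w / (w - 1) ^ 4) = (√w / (w - 1) ^ 3) ^ 2 := by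
    rw [div_pow, Real.sq_sqrt hw₀.le]
    field_simp
  rw [hrad, Real.sqrt_sq (div_nonneg (Real.sqrt_nonneg w) (pow_nonneg (by linarith) 3))]
  field_simp
  rw [Real.sq_sqrt hw₀.le]

end OneLt

/-- Pointwise limits of `Fₙ(w)/n`: `0` for `0 < w < 1`, and
`1/(2(w−1)√w)` for `w > 1`. -/
theorem F_pointwise_limits :
    (∀ w : ℝ, 0 < w → w < 1 →
      Tendsto (fun n : ℕ => F n w / n) atTop (nhds 0)) ∧
    (∀ w : ℝ, 1 < w →
      Tendsto (fun n : ℕ => F n w / n)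
        atTop (nhds (1 / (2 * (w - 1) * Real.sqrt w)))) :=
  ⟨fun _ ↦ tendsto_F_div_of_lt_one, fun _ ↦ tendsto_F_div_of_one_lt⟩
end
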